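/- arXiv:1606.07250 — 6 statements merged into one kernel-verified Lean document; each statement's English description precedes it below -/
import Mathlib

section
/- Let Λ be a finite family of dyadic intervals in [0,1], and for each x in E = ∪_{I∈Λ} I let I(x) denote the minimal interval of Λ containing x. Suppose ω is a weight and (v_I)_{I∈𝒟} positive reals such that ∑_{I∈𝒟, J⊆I} v_I^{−1} ≤ C·ω(J)^{−1} for all dyadic J. Then for every 1 ≤ p < ∞, (∑_{I∈Λ} ω(I)/v_I)^{1/p} ≤ C^{1/p}·(∫_E ω(I(x))^{−1} ω(x) dx)^{1/p}. -/
/-!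
Write `I(x)` for the minimal interval of `Λ` containing `x ∈ E`. Then
`∑_{I ∈ Λ} ω(I)/v_I = ∫_E (∑_{I ∈ Λ, x ∈ I} v_I⁻¹) ω(x) dx`, and every `I ∈ Λ` containing `x`
contains `I(x)`, so the inner sum is bounded by the sum over all dyadic ancestors of `I(x)`,
hence by `C ω(I(x))⁻¹`.
-/

open MeasureTheory Set

noncomputable def dyadicI (n k : ℕ) : Set ℝ := Set.Ico ((k : ℝ) / 2 ^ n) (((k : ℝ) + 1) / 2 ^ n)

def IsDyadic (I : ℕ × ℕ) : Prop := I.2 < 2 ^ I.1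

noncomputable def wInt (w : ℝ → ℝ) (I : ℕ × ℕ) : ℝ := ∫ x in dyadicI I.1 I.2, w x

def ancestors (J : ℕ × ℕ) : Set (ℕ × ℕ) :=
  {I | IsDyadic I ∧ dyadicI J.1 J.2 ⊆ dyadicI I.1 I.2}

lemma measurableSet_dyadicI (n k : ℕ) : MeasurableSet (dyadicI n k) := measurableSet_Ico

lemma dyadicI_left_lt_right (n k : ℕ) : (k : ℝ) / 2 ^ n < ((k : ℝ) + 1) / 2 ^ n :=
  div_lt_div_of_pos_right (lt_add_one _) (by positivity)

lemma dyadicI_subset_Ico_zero_one {I : ℕ × ℕ} (hI : IsDyadic I) :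
    dyadicI I.1 I.2 ⊆ Ico (0 : ℝ) 1 := by
  refine Ico_subset_Ico (by positivity) ?_
  rw [div_le_one (by positivity)]
  exact_mod_cast Nat.succ_le_of_lt hI

lemma le_level_of_dyadicI_subset {I J : ℕ × ℕ} (h : dyadicI I.1 I.2 ⊆ dyadicI J.1 J.2) :
    J.1 ≤ I.1 := by
  obtain ⟨hleft, hright⟩ := (Ico_subset_Ico_iff (dyadicI_left_lt_right I.1 I.2)).mp h
  have hlength : ((2 : ℝ) ^ I.1)⁻¹ ≤ ((2 : ℝ) ^ J.1)⁻¹ := by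
    simp only [div_eq_mul_inv] at hleft hright
    linarith
  rw [inv_le_inv₀ (by positivity) (by positivity)] at hlength
  exact (pow_le_pow_iff_right₀ one_lt_two).mp hlength

lemma dyadicI_injective : Function.Injective fun I : ℕ × ℕ => dyadicI I.1 I.2 := by
  intro I J h
  have hlevel : I.1 = J.1 :=
    le_antisymm (le_level_of_dyadicI_subset h.ge) (le_level_of_dyadicI_subset h.le)
  obtain ⟨hleft, -⟩ := (Ico_eq_Ico_iff (Or.inl (dyadicI_left_lt_right I.1 I.2))).mp h
  rw [hlevel, div_left_inj' (by positivity), Nat.cast_inj] at hleft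
  exact Prod.ext hlevel hleft

instance finite_ancestors (J : ℕ × ℕ) : Finite (ancestors J) := by
  refine Finite.Set.subset (Iic (J.1, 2 ^ J.1)) fun I ⟨hI, hsub⟩ => ?_
  have hlevel := le_level_of_dyadicI_subset hsub
  exact ⟨hlevel, hI.le.trans (Nat.pow_le_pow_right two_pos hlevel)⟩

lemma Finset.sum_le_tsum_subtype {α : Type*} {s : Set α} [Finite s] {F : Finset α} {f : α → ℝ}
    (hF : ∀ a ∈ F, a ∈ s) (hf : ∀ a ∈ s, 0 ≤ f a) : ∑ a ∈ F, f a ≤ ∑' a : s, f a := by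
  classical
  rw [← Finset.sum_subtype_of_mem f hF]
  exact Summable.sum_le_tsum _ (fun a _ => hf a a.2) Summable.of_finite

lemma integrableOn_dyadicI_of_wInt_ne_zero {w : ℝ → ℝ} (h : wInt w (0, 0) ≠ 0) {I : ℕ × ℕ}
    (hI : IsDyadic I) : IntegrableOn w (dyadicI I.1 I.2) := by
  have hunit : IntegrableOn w (dyadicI 0 0) := Integrable.of_integral_ne_zero h
  rw [show dyadicI 0 0 = Ico 0 1 by simp [dyadicI]] at hunit
  exact hunit.mono_set (dyadicI_subset_Ico_zero_one hI)

lemma integrableOn_indicator_dyadicI_mul {w : ℝ → ℝ} {E : Set ℝ} (hw : IntegrableOn w E)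
    (I : ℕ × ℕ) (c : ℝ) :
    IntegrableOn (fun x => (dyadicI I.1 I.2).indicator (fun _ => c) x * w x) E := by
  simp_rw [← indicator_mul_left]
  exact (hw.const_mul c).indicator (measurableSet_dyadicI _ _)

/-- `sel x` plays the role of the paper's `I(x)`. -/
def IsMinimalSelector (Λ : Finset (ℕ × ℕ)) (sel : ℝ → ℕ × ℕ) : Prop :=
  ∀ x ∈ ⋃ I ∈ Λ, dyadicI I.1 I.2,
    sel x ∈ Λ ∧ x ∈ dyadicI (sel x).1 (sel x).2 ∧
      ∀ J ∈ Λ, x ∈ dyadicI J.1 J.2 → dyadicI (sel x).1 (sel x).2 ⊆ dyadicI J.1 J.2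

/-- The fibre `{x | I(x) = I}`, written as a difference of finite unions of intervals so that it
is visibly measurable; this is what makes `x ↦ ω(I(x))⁻¹` integrable against `ω`. -/
def minimalCell (Λ : Finset (ℕ × ℕ)) (I : ℕ × ℕ) : Set ℝ :=
  dyadicI I.1 I.2 \ ⋃ (J ∈ Λ) (_ : ¬ dyadicI I.1 I.2 ⊆ dyadicI J.1 J.2), dyadicI J.1 J.2

section MinimalSelector

variable {Λ : Finset (ℕ × ℕ)} {sel : ℝ → ℕ × ℕ}

lemma measurableSet_biUnion_dyadicI : MeasurableSet (⋃ I ∈ Λ, dyadicI I.1 I.2) :=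
  Finset.measurableSet_biUnion _ fun _ _ => measurableSet_dyadicI _ _

lemma measurableSet_minimalCell (I : ℕ × ℕ) : MeasurableSet (minimalCell Λ I) :=
  (measurableSet_dyadicI _ _).diff
    (Finset.measurableSet_biUnion _ fun _ _ => .iUnion fun _ => measurableSet_dyadicI _ _)

lemma mem_minimalCell_iff {I : ℕ × ℕ} {x : ℝ} : x ∈ minimalCell Λ I ↔
    x ∈ dyadicI I.1 I.2 ∧ ∀ J ∈ Λ, x ∈ dyadicI J.1 J.2 → dyadicI I.1 I.2 ⊆ dyadicI J.1 J.2 := by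
  simp only [minimalCell, mem_sdiff, mem_iUnion, exists_prop, not_exists]
  exact and_congr_right fun _ => forall_congr' fun J => by tauto

lemma IsMinimalSelector.mem_minimalCell_iff (hsel : IsMinimalSelector Λ sel) {x : ℝ}
    (hx : x ∈ ⋃ I ∈ Λ, dyadicI I.1 I.2) {I : ℕ × ℕ} (hI : I ∈ Λ) :
    x ∈ minimalCell Λ I ↔ sel x = I := by
  obtain ⟨hselΛ, hxsel, hmin⟩ := hsel x hx
  rw [_root_.mem_minimalCell_iff]
  constructor
  · rintro ⟨hxI, hImin⟩
    exact dyadicI_injective ((hmin I hI hxI).antisymm (hImin _ hselΛ hxsel))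
  · rintro rfl
    exact ⟨hxsel, hmin⟩

lemma IsMinimalSelector.eqOn_sum_indicator (hsel : IsMinimalSelector Λ sel) (c : ℕ × ℕ → ℝ)
    (w : ℝ → ℝ) :
    EqOn (fun x => c (sel x) * w x)
      (fun x => ∑ I ∈ Λ, (minimalCell Λ I).indicator (fun y => c I * w y) x)
      (⋃ I ∈ Λ, dyadicI I.1 I.2) := by
  intro x hx
  have hselΛ := (hsel x hx).1
  dsimp only
  rw [Finset.sum_eq_single_of_mem (sel x) hselΛ fun I hI hne => indicator_of_notMem
      (fun hmem => hne ((hsel.mem_minimalCell_iff hx hI).mp hmem).symm) _,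
    indicator_of_mem ((hsel.mem_minimalCell_iff hx hselΛ).mpr rfl)]

lemma IsMinimalSelector.integrableOn (hsel : IsMinimalSelector Λ sel) (c : ℕ × ℕ → ℝ)
    {w : ℝ → ℝ} (hw : IntegrableOn w (⋃ I ∈ Λ, dyadicI I.1 I.2)) :
    IntegrableOn (fun x => c (sel x) * w x) (⋃ I ∈ Λ, dyadicI I.1 I.2) :=
  IntegrableOn.congr_fun
    (integrable_finsetSum _ fun _ _ => (hw.const_mul _).indicator (measurableSet_minimalCell _))
    (hsel.eqOn_sum_indicator c w).symm measurableSet_biUnion_dyadicI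

lemma IsMinimalSelector.sum_indicator_inv_le {w : ℝ → ℝ} {v : ℕ × ℕ → ℝ} {C : ℝ}
    (hsel : IsMinimalSelector Λ sel) (hΛ : ∀ I ∈ Λ, IsDyadic I)
    (hv : ∀ I, IsDyadic I → 0 < v I)
    (hDRCC : ∀ J, IsDyadic J → ∑' I : ancestors J, (v I.1)⁻¹ ≤ C * (wInt w J)⁻¹)
    {x : ℝ} (hx : x ∈ ⋃ I ∈ Λ, dyadicI I.1 I.2) :
    ∑ I ∈ Λ, (dyadicI I.1 I.2).indicator (fun _ => (v I)⁻¹) x ≤ C * (wInt w (sel x))⁻¹ := by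
  classical
  obtain ⟨hselΛ, -, hmin⟩ := hsel x hx
  rw [Finset.sum_indicator_eq_sum_filter]
  refine le_trans ?_ (hDRCC _ (hΛ _ hselΛ))
  refine Finset.sum_le_tsum_subtype (fun I hI => ?_) fun I hI => (inv_pos.mpr (hv I hI.1)).le
  obtain ⟨hIΛ, hxI⟩ := Finset.mem_filter.mp hI
  exact ⟨hΛ I hIΛ, hmin I hIΛ hxI⟩

lemma sum_wInt_div_eq_setIntegral {w : ℝ → ℝ} {v : ℕ × ℕ → ℝ}
    (hwE : IntegrableOn w (⋃ I ∈ Λ, dyadicI I.1 I.2)) :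
    ∑ I ∈ Λ, wInt w I / v I = ∫ x in ⋃ I ∈ Λ, dyadicI I.1 I.2,
      (∑ I ∈ Λ, (dyadicI I.1 I.2).indicator (fun _ => (v I)⁻¹) x) * w x := by
  simp_rw [Finset.sum_mul]
  rw [integral_finsetSum _ fun I _ => integrableOn_indicator_dyadicI_mul hwE I _]
  refine Finset.sum_congr rfl fun I hI => ?_
  simp_rw [← indicator_mul_left]
  rw [setIntegral_indicator (measurableSet_dyadicI _ _),
    inter_eq_self_of_subset_right (Finset.subset_set_biUnion_of_mem hI),
    integral_const_mul, wInt, div_eq_inv_mul]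

lemma IsMinimalSelector.sum_wInt_div_le {w : ℝ → ℝ} {v : ℕ × ℕ → ℝ} {C : ℝ}
    (hsel : IsMinimalSelector Λ sel) (hΛ : ∀ I ∈ Λ, IsDyadic I) (hw : ∀ x, 0 ≤ w x)
    (hwE : IntegrableOn w (⋃ I ∈ Λ, dyadicI I.1 I.2)) (hv : ∀ I, IsDyadic I → 0 < v I)
    (hDRCC : ∀ J, IsDyadic J → ∑' I : ancestors J, (v I.1)⁻¹ ≤ C * (wInt w J)⁻¹) :
    ∑ I ∈ Λ, wInt w I / v I ≤ C * ∫ x in ⋃ I ∈ Λ, dyadicI I.1 I.2, (wInt w (sel x))⁻¹ * w x := by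
  have hsum : IntegrableOn
      (fun x => (∑ I ∈ Λ, (dyadicI I.1 I.2).indicator (fun _ => (v I)⁻¹) x) * w x)
      (⋃ I ∈ Λ, dyadicI I.1 I.2) := by
    simp_rw [Finset.sum_mul]
    exact integrable_finsetSum _ fun I _ => integrableOn_indicator_dyadicI_mul hwE I _
  rw [sum_wInt_div_eq_setIntegral hwE, ← integral_const_mul]
  refine setIntegral_mono_on hsum ((hsel.integrableOn (fun I => (wInt w I)⁻¹) hwE).const_mul C)
    measurableSet_biUnion_dyadicI fun x hx => ?_
  rw [← mul_assoc]
  exact mul_le_mul_of_nonneg_right (hsel.sum_indicator_inv_le hΛ hv hDRCC hx) (hw x)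

end MinimalSelector

theorem stmt1 (w : ℝ → ℝ) (v : ℕ × ℕ → ℝ) (C p : ℝ) (hC : 0 < C) (hp : 1 ≤ p)
    (hw : ∀ x, 0 ≤ w x) (hv : ∀ I, IsDyadic I → 0 < v I)
    (hpos : ∀ I, IsDyadic I → 0 < wInt w I)
    (hDRCC : ∀ J, IsDyadic J → ∑' I : ancestors J, (v I.1)⁻¹ ≤ C * (wInt w J)⁻¹)
    (Λ : Finset (ℕ × ℕ)) (hΛ : ∀ I ∈ Λ, IsDyadic I)
    (sel : ℝ → ℕ × ℕ)
    (hsel : ∀ x ∈ ⋃ I ∈ Λ, dyadicI I.1 I.2,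
      sel x ∈ Λ ∧ x ∈ dyadicI (sel x).1 (sel x).2 ∧
        ∀ J ∈ Λ, x ∈ dyadicI J.1 J.2 → dyadicI (sel x).1 (sel x).2 ⊆ dyadicI J.1 J.2) :
    (∑ I ∈ Λ, wInt w I / v I) ^ (1 / p) ≤
      C ^ (1 / p) *
        (∫ x in ⋃ I ∈ Λ, dyadicI I.1 I.2, (wInt w (sel x))⁻¹ * w x) ^ (1 / p) := by
  have hwInt_nonneg : ∀ I, 0 ≤ wInt w I := fun I => integral_nonneg hw
  have hwE : IntegrableOn w (⋃ I ∈ Λ, dyadicI I.1 I.2) := integrableOn_finset_iUnion.mpr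
    fun I hI => integrableOn_dyadicI_of_wInt_ne_zero (hpos (0, 0) Nat.one_pos).ne' (hΛ I hI)
  have hlhs : 0 ≤ ∑ I ∈ Λ, wInt w I / v I :=
    Finset.sum_nonneg fun I hI => div_nonneg (hwInt_nonneg I) (hv I (hΛ I hI)).le
  have hrhs : 0 ≤ ∫ x in ⋃ I ∈ Λ, dyadicI I.1 I.2, (wInt w (sel x))⁻¹ * w x :=
    integral_nonneg fun x => mul_nonneg (inv_nonneg.mpr (hwInt_nonneg _)) (hw x)
  rw [← Real.mul_rpow hC.le hrhs]
  exact Real.rpow_le_rpow hlhs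
    (IsMinimalSelector.sum_wInt_div_le hsel hΛ hw hwE hv hDRCC) (by positivity)
end

section
/- Let Λ be a finite family of dyadic intervals, E = ∪_{I∈Λ} I, and for x ∈ E let I(x) be the minimal interval of Λ containing x. If ω is a weight and (v_I)_{I∈𝒟} positive reals such that ∑_{I∈𝒟, J⊆I} ω(I)^{−2/p} ≤ C·v_J^{−2/p} for all dyadic J (where 1 < p < ∞), then for every x ∈ E, ∑_{I∈Λ} ω(I)^{−2/p} χ_I(x) ≤ C·v_{I(x)}^{−2/p}, and consequently (∫_E (∑_{I∈Λ} ω(I)^{−2/p} χ_I(x))^{p/2} ω(x) dx)^{1/p} ≤ C^{1/2}·(∑_{I∈Λ} ω(I)/v_I)^{1/p}. -/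
open MeasureTheory Set

lemma le_of_dyadicI_subset {m j n k : ℕ} (h : dyadicI m j ⊆ dyadicI n k) : n ≤ m := by
  have hlt : ∀ (n k : ℕ), (k : ℝ) / 2 ^ n < ((k : ℝ) + 1) / 2 ^ n := fun n k =>
    div_lt_div_of_pos_right (by linarith) (by positivity)
  rw [dyadicI, dyadicI, Ico_subset_Ico_iff (hlt m j)] at h
  have hlen : (1 : ℝ) / 2 ^ m ≤ 1 / 2 ^ n := by
    have := sub_le_sub h.2 h.1
    rwa [div_sub_div_same, div_sub_div_same, add_sub_cancel_left, add_sub_cancel_left] at this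
  rw [one_div_le_one_div (by positivity) (by positivity)] at hlen
  exact (pow_le_pow_iff_right₀ one_lt_two).mp hlen

lemma ancestors_finite (J : ℕ × ℕ) : (ancestors J).Finite := by
  refine (Finset.range (J.1 + 1) ×ˢ Finset.range (2 ^ J.1)).finite_toSet.subset ?_
  rintro I ⟨hdyadic, hsub⟩
  have hle := le_of_dyadicI_subset hsub
  simp only [Finset.coe_product, Finset.coe_range, mem_prod, mem_Iio]
  exact ⟨Nat.lt_succ_of_le hle, hdyadic.trans_le (Nat.pow_le_pow_right two_pos hle)⟩

lemma sum_indicator_le_tsum_ancestors (f : ℕ × ℕ → ℝ) (hf : ∀ I, IsDyadic I → 0 ≤ f I)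
    {Λ : Finset (ℕ × ℕ)} (hΛ : ∀ I ∈ Λ, IsDyadic I) {J : ℕ × ℕ} {x : ℝ}
    (hJ : ∀ I ∈ Λ, x ∈ dyadicI I.1 I.2 → dyadicI J.1 J.2 ⊆ dyadicI I.1 I.2) :
    ∑ I ∈ Λ, (dyadicI I.1 I.2).indicator (fun _ => f I) x ≤ ∑' I : ancestors J, f I := by
  have hind_nonneg : ∀ I, 0 ≤ (ancestors J).indicator f I :=
    fun I => indicator_nonneg (fun I hI => hf I hI.1) I
  calc ∑ I ∈ Λ, (dyadicI I.1 I.2).indicator (fun _ => f I) x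
      ≤ ∑ I ∈ Λ, (ancestors J).indicator f I := by
        refine Finset.sum_le_sum fun I hI => ?_
        by_cases hx : x ∈ dyadicI I.1 I.2
        · have hanc : I ∈ ancestors J := ⟨hΛ I hI, hJ I hI hx⟩
          rw [indicator_of_mem hx, indicator_of_mem hanc]
        · rw [indicator_of_notMem hx]
          exact hind_nonneg I
    -- summability matters here: a non-summable `tsum` would be the junk value `0`
    _ ≤ ∑' I, (ancestors J).indicator f I :=
        Summable.sum_le_tsum Λ (fun I _ => hind_nonneg I) <| summable_of_hasFiniteSupport <|
          (ancestors_finite J).subset (support_indicator_subset)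
    _ = ∑' I : ancestors J, f I := (tsum_subtype _ _).symm

section IntegralOverUnion

variable {ι α : Type*} [MeasurableSpace α] {μ : Measure α} {Λ : Finset ι} {s : ι → Set α}
  {w : α → ℝ}

lemma integrable_sum_indicator_mul (hs : ∀ i ∈ Λ, MeasurableSet (s i))
    (hw : ∀ i ∈ Λ, IntegrableOn w (s i) μ) (c : ι → ℝ) :
    Integrable (fun x => (∑ i ∈ Λ, (s i).indicator (fun _ => c i) x) * w x) μ := by
  simp_rw [Finset.sum_mul, ← indicator_mul_left]
  exact integrable_finsetSum _ fun i hi =>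
    IntegrableOn.integrable_indicator ((hw i hi).const_mul (c i)) (hs i hi)

lemma setIntegral_biUnion_sum_indicator_mul (hs : ∀ i ∈ Λ, MeasurableSet (s i))
    (hw : ∀ i ∈ Λ, IntegrableOn w (s i) μ) (c : ι → ℝ) :
    ∫ x in ⋃ i ∈ Λ, s i, (∑ i ∈ Λ, (s i).indicator (fun _ => c i) x) * w x ∂μ
      = ∑ i ∈ Λ, c i * ∫ x in s i, w x ∂μ := by
  simp_rw [Finset.sum_mul, ← indicator_mul_left]
  rw [integral_finsetSum _ fun i hi =>
    (IntegrableOn.integrable_indicator ((hw i hi).const_mul (c i)) (hs i hi)).integrableOn]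
  refine Finset.sum_congr rfl fun i hi => ?_
  rw [setIntegral_indicator (hs i hi), inter_eq_right.mpr (Finset.subset_set_biUnion_of_mem hi),
    integral_const_mul]

lemma setIntegral_biUnion_mul_le (hs : ∀ i ∈ Λ, MeasurableSet (s i))
    (hw_int : ∀ i ∈ Λ, IntegrableOn w (s i) μ) (hw : ∀ x, 0 ≤ w x)
    {c : ι → ℝ} (hc : ∀ i ∈ Λ, 0 ≤ c i) {F : α → ℝ} (hF_nonneg : ∀ x, 0 ≤ F x)
    (hF : ∀ x ∈ ⋃ i ∈ Λ, s i, ∃ i ∈ Λ, x ∈ s i ∧ F x ≤ c i) :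
    ∫ x in ⋃ i ∈ Λ, s i, F x * w x ∂μ ≤ ∑ i ∈ Λ, c i * ∫ x in s i, w x ∂μ := by
  rw [← setIntegral_biUnion_sum_indicator_mul hs hw_int c]
  refine integral_mono_of_nonneg (ae_of_all _ fun x => mul_nonneg (hF_nonneg x) (hw x))
    (integrable_sum_indicator_mul hs hw_int c).integrableOn ?_
  refine (ae_restrict_iff' (Finset.measurableSet_biUnion Λ hs)).2 (ae_of_all _ fun x hx => ?_)
  obtain ⟨i, hi, hxi, hFx⟩ := hF x hx
  have hc_le : c i ≤ ∑ i ∈ Λ, (s i).indicator (fun _ => c i) x := by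
    simpa only [indicator_of_mem hxi] using Finset.single_le_sum
      (f := fun i => (s i).indicator (fun _ => c i) x)
      (fun i hi => indicator_nonneg (fun _ _ => hc i hi) x) hi
  exact mul_le_mul_of_nonneg_right (hFx.trans hc_le) (hw x)

end IntegralOverUnion

lemma rpow_half_le_of_le_mul_rpow {a C v p : ℝ} (ha : 0 ≤ a) (hC : 0 ≤ C) (hv : 0 < v)
    (hp : 0 < p) (h : a ≤ C * v ^ (-(2 / p))) : a ^ (p / 2) ≤ C ^ (p / 2) * v⁻¹ := by
  calc a ^ (p / 2) ≤ (C * v ^ (-(2 / p))) ^ (p / 2) := Real.rpow_le_rpow ha h (by positivity)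
    _ = C ^ (p / 2) * v⁻¹ := by
      rw [Real.mul_rpow hC (Real.rpow_nonneg hv.le _), ← Real.rpow_mul hv.le,
        show -(2 / p) * (p / 2) = -1 by field_simp, Real.rpow_neg_one]

lemma integrableOn_of_wInt_pos {w : ℝ → ℝ} {I : ℕ × ℕ} (h : 0 < wInt w I) :
    IntegrableOn w (dyadicI I.1 I.2) :=
  Integrable.of_integral_ne_zero h.ne'

theorem stmt2 (w : ℝ → ℝ) (v : ℕ × ℕ → ℝ) (C p : ℝ) (hC : 0 < C) (hp : 1 < p)
    (hw : ∀ x, 0 ≤ w x) (hv : ∀ I, IsDyadic I → 0 < v I)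
    (hpos : ∀ I, IsDyadic I → 0 < wInt w I)
    (hDRCC : ∀ J, IsDyadic J →
      ∑' I : ancestors J, (wInt w I.1) ^ (-(2 / p)) ≤ C * (v J) ^ (-(2 / p)))
    (Λ : Finset (ℕ × ℕ)) (hΛ : ∀ I ∈ Λ, IsDyadic I)
    (sel : ℝ → ℕ × ℕ)
    (hsel : ∀ x ∈ ⋃ I ∈ Λ, dyadicI I.1 I.2,
      sel x ∈ Λ ∧ x ∈ dyadicI (sel x).1 (sel x).2 ∧
        ∀ J ∈ Λ, x ∈ dyadicI J.1 J.2 → dyadicI (sel x).1 (sel x).2 ⊆ dyadicI J.1 J.2) :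
    (∀ x ∈ ⋃ I ∈ Λ, dyadicI I.1 I.2,
      (∑ I ∈ Λ, Set.indicator (dyadicI I.1 I.2) (fun _ => (wInt w I) ^ (-(2 / p))) x)
        ≤ C * (v (sel x)) ^ (-(2 / p))) ∧
    (∫ x in ⋃ I ∈ Λ, dyadicI I.1 I.2,
        (∑ I ∈ Λ, Set.indicator (dyadicI I.1 I.2) (fun _ => (wInt w I) ^ (-(2 / p))) x) ^ (p / 2)
          * w x) ^ (1 / p)
      ≤ C ^ ((1 : ℝ) / 2) * (∑ I ∈ Λ, wInt w I / v I) ^ (1 / p) := by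
  have hp0 : 0 < p := by linarith
  have hweight_nonneg : ∀ I, IsDyadic I → 0 ≤ wInt w I ^ (-(2 / p)) :=
    fun I hI => Real.rpow_nonneg (hpos I hI).le _
  have hsum_nonneg : ∀ x, 0 ≤ ∑ I ∈ Λ,
      (dyadicI I.1 I.2).indicator (fun _ => wInt w I ^ (-(2 / p))) x := fun x =>
    Finset.sum_nonneg fun I hI => indicator_nonneg (fun _ _ => hweight_nonneg I (hΛ I hI)) x
  have hpointwise : ∀ x ∈ ⋃ I ∈ Λ, dyadicI I.1 I.2,
      ∑ I ∈ Λ, (dyadicI I.1 I.2).indicator (fun _ => wInt w I ^ (-(2 / p))) x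
        ≤ C * v (sel x) ^ (-(2 / p)) := fun x hx =>
    (sum_indicator_le_tsum_ancestors _ hweight_nonneg hΛ (hsel x hx).2.2).trans
      (hDRCC _ (hΛ _ (hsel x hx).1))
  refine ⟨hpointwise, ?_⟩
  have hintegral := setIntegral_biUnion_mul_le (μ := volume)
    (c := fun I => C ^ (p / 2) * (v I)⁻¹) (fun I _ => measurableSet_dyadicI I.1 I.2)
    (fun I hI => integrableOn_of_wInt_pos (hpos I (hΛ I hI))) hw
    (fun I hI => by have := hv I (hΛ I hI); positivity)
    (fun x => Real.rpow_nonneg (hsum_nonneg x) (p / 2)) fun x hx =>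
      ⟨sel x, (hsel x hx).1, (hsel x hx).2.1, rpow_half_le_of_le_mul_rpow (hsum_nonneg x) hC.le
        (hv _ (hΛ _ (hsel x hx).1)) hp0 (hpointwise x hx)⟩
  have hratio_nonneg : 0 ≤ ∑ I ∈ Λ, wInt w I / v I :=
    Finset.sum_nonneg fun I hI => div_nonneg (hpos I (hΛ I hI)).le (hv I (hΛ I hI)).le
  calc _ ≤ (C ^ (p / 2) * ∑ I ∈ Λ, wInt w I / v I) ^ (1 / p) := by
        refine Real.rpow_le_rpow (integral_nonneg fun x => mul_nonneg
          (Real.rpow_nonneg (hsum_nonneg x) _) (hw x)) (hintegral.trans_eq ?_) (by positivity)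
        simp only [Finset.mul_sum, mul_assoc, div_eq_inv_mul, wInt]
    _ = C ^ ((1 : ℝ) / 2) * (∑ I ∈ Λ, wInt w I / v I) ^ (1 / p) := by
        rw [Real.mul_rpow (by positivity) hratio_nonneg, ← Real.rpow_mul hC.le]
        congr 2
        field_simp
end

section
/- Let X be a Banach space with normalized Schauder basis (eₙ) with biorthogonal functionals (eₙ*). Suppose there is a constant D > 0 such that ‖x − G(x)‖ ≤ D·𝒟*_m(x) for every x ∈ X, m ∈ ℕ, and every greedy projection G(x) = P_A(x) onto a greedy set A of cardinality m (i.e., min_{n∈A}|eₙ*(x)| ≥ max_{n∉A}|eₙ*(x)|), where 𝒟*_m(x) = inf{ ‖x − α·1_{ηB}‖ : α ∈ ℝ, |B| = m, η ∈ {±1}^B }. Then for every x ∈ X and every finite set C of indices, ‖x − P_C(x)‖ ≤ D·‖x‖, i.e., the basis is suppression unconditional with constant D. -/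
/-!
Shift `x` by `μ • 1_C`, where `μ = 2M` and `M` bounds all coefficients of `x` (they tend to zero
along a basis expansion). Then `C` becomes a greedy set of `y = x + μ • 1_C`,
the greedy error `y - P_C y` equals `x - P_C x`, and `μ • 1_C` is an admissible competitor with
`‖y - μ • 1_C‖ = ‖x‖`.
-/

open Finset Filter Topology

theorem tendsto_zero_of_tendsto_sum_range {E : Type*} [AddCommGroup E] [TopologicalSpace E]
    [IsTopologicalAddGroup E] {f : ℕ → E} {s : E}
    (h : Tendsto (fun N => ∑ n ∈ range N, f n) atTop (𝓝 s)) : Tendsto f atTop (𝓝 0) := by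
  have hsucc := (h.comp (tendsto_add_atTop_nat 1)).sub h
  simp only [Function.comp_def, sum_range_succ, add_sub_cancel_left, sub_self] at hsucc
  exact hsucc

theorem abs_le_abs_add_of_abs_le {u v M μ : ℝ} (hu : |u| ≤ M) (hv : |v| ≤ M) (hμ : 2 * M ≤ μ) :
    |u| ≤ |v + μ| := by
  linarith [neg_abs_le v, le_abs_self (v + μ), abs_nonneg u]

def IsGreedySet (c : ℕ → ℝ) (A : Finset ℕ) : Prop :=
  ∀ a ∈ A, ∀ b ∉ A, |c b| ≤ |c a|

section SchauderBasis

variable {X : Type*} [NormedAddCommGroup X] [NormedSpace ℝ X]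
  {e : ℕ → X} {e' : ℕ → X →L[ℝ] ℝ}

theorem exists_abs_coeff_le (hnorm : ∀ n, ‖e n‖ = 1)
    (hbasis : ∀ x : X, Tendsto (fun N => ∑ n ∈ range N, e' n x • e n) atTop (𝓝 x)) (x : X) :
    ∃ M, ∀ n, |e' n x| ≤ M := by
  have hcoeff : Tendsto (fun n => |e' n x|) atTop (𝓝 0) := by
    simpa [norm_smul, hnorm] using (tendsto_zero_of_tendsto_sum_range (hbasis x)).norm
  obtain ⟨M, hM⟩ := hcoeff.bddAbove_range
  exact ⟨M, fun n => hM ⟨n, rfl⟩⟩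

theorem coeff_add_smul_sum (hbi : ∀ n m, e' n (e m) = if n = m then 1 else 0)
    (x : X) (μ : ℝ) (C : Finset ℕ) (n : ℕ) :
    e' n (x + μ • ∑ m ∈ C, e m) = e' n x + if n ∈ C then μ else 0 := by
  simp [hbi]

theorem sum_coeff_add_smul_sum (hbi : ∀ n m, e' n (e m) = if n = m then 1 else 0)
    (x : X) (μ : ℝ) (C : Finset ℕ) :
    ∑ n ∈ C, e' n (x + μ • ∑ m ∈ C, e m) • e n = ∑ n ∈ C, e' n x • e n + μ • ∑ n ∈ C, e n := by
  calc _ = ∑ n ∈ C, (e' n x • e n + μ • e n) :=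
        sum_congr rfl fun n hn => by rw [coeff_add_smul_sum hbi, if_pos hn, add_smul]
    _ = _ := by rw [sum_add_distrib, smul_sum]

theorem isGreedySet_add_smul_sum (hbi : ∀ n m, e' n (e m) = if n = m then 1 else 0)
    {x : X} {M : ℝ} (hM : ∀ n, |e' n x| ≤ M) (C : Finset ℕ) :
    IsGreedySet (fun n => e' n (x + (2 * M) • ∑ m ∈ C, e m)) C := by
  intro a ha b hb
  simp only [coeff_add_smul_sum hbi, if_pos ha, if_neg hb, add_zero]
  exact abs_le_abs_add_of_abs_le (hM b) (hM a) le_rfl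

end SchauderBasis

theorem stmt5_general {X : Type*} [NormedAddCommGroup X] [NormedSpace ℝ X]
    (e : ℕ → X) (e' : ℕ → X →L[ℝ] ℝ)
    (hnorm : ∀ n, ‖e n‖ = 1)
    (hbi : ∀ n m, e' n (e m) = if n = m then 1 else 0)
    (hbasis : ∀ x : X,
      Filter.Tendsto (fun N => ∑ n ∈ Finset.range N, e' n x • e n) Filter.atTop (nhds x))
    (D : ℝ)
    -- the PCCG hypothesis: the error of any greedy projection is bounded by `D` times
    -- any competitor `α • 1_{ηB}` with `|B| = |A|`
    (hyp : ∀ (x : X) (A : Finset ℕ),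
      (∀ a ∈ A, ∀ b ∉ A, |e' b x| ≤ |e' a x|) →
      ∀ (α : ℝ) (B : Finset ℕ) (η : ℕ → ℝ), B.card = A.card →
        (∀ n ∈ B, η n = 1 ∨ η n = -1) →
        ‖x - ∑ n ∈ A, e' n x • e n‖ ≤ D * ‖x - α • ∑ n ∈ B, η n • e n‖) :
    -- suppression unconditionality with constant `D`
    ∀ (x : X) (C : Finset ℕ), ‖x - ∑ n ∈ C, e' n x • e n‖ ≤ D * ‖x‖ := by
  intro x C
  obtain ⟨M, hM⟩ := exists_abs_coeff_le hnorm hbasis x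
  have key := hyp _ C (isGreedySet_add_smul_sum hbi hM C) (2 * M) C (fun _ => 1) rfl
    (fun _ _ => Or.inl rfl)
  have hcompetitor : x + (2 * M) • ∑ n ∈ C, e n - (2 * M) • ∑ n ∈ C, (1 : ℝ) • e n = x := by
    simp
  have herror : x + (2 * M) • ∑ n ∈ C, e n - ∑ n ∈ C, e' n (x + (2 * M) • ∑ m ∈ C, e m) • e n
      = x - ∑ n ∈ C, e' n x • e n := by
    rw [sum_coeff_add_smul_sum hbi]
    abel
  rwa [herror, hcompetitor] at key

theorem stmt5 {X : Type*} [NormedAddCommGroup X] [NormedSpace ℝ X] [CompleteSpace X]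
    (e : ℕ → X) (e' : ℕ → X →L[ℝ] ℝ)
    (hnorm : ∀ n, ‖e n‖ = 1)
    (hbi : ∀ n m, e' n (e m) = if n = m then 1 else 0)
    (hbasis : ∀ x : X,
      Filter.Tendsto (fun N => ∑ n ∈ Finset.range N, e' n x • e n) Filter.atTop (nhds x))
    (D : ℝ) (hD : 0 < D)
    -- the PCCG hypothesis: the error of any greedy projection is bounded by `D` times
    -- any competitor `α • 1_{ηB}` with `|B| = |A|`
    (hyp : ∀ (x : X) (A : Finset ℕ),
      (∀ a ∈ A, ∀ b ∉ A, |e' b x| ≤ |e' a x|) →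
      ∀ (α : ℝ) (B : Finset ℕ) (η : ℕ → ℝ), B.card = A.card →
        (∀ n ∈ B, η n = 1 ∨ η n = -1) →
        ‖x - ∑ n ∈ A, e' n x • e n‖ ≤ D * ‖x - α • ∑ n ∈ B, η n • e n‖) :
    -- suppression unconditionality with constant `D`
    ∀ (x : X) (C : Finset ℕ), ‖x - ∑ n ∈ C, e' n x • e n‖ ≤ D * ‖x‖ :=
  stmt5_general e e' hnorm hbi hbasis D hyp
end

section
/- Let X be a Banach space with normalized Schauder basis (eₙ), 0 < s ≤ 1, and suppose ‖y − Gˢ(y)‖ ≤ D(s)·𝒟*_N(y) for all y, N, and s-greedy operators Gˢ of order N, where 𝒟*_N(y) = inf{ ‖y − α·1_{ηB}‖ : α ∈ ℝ, |B| = N, η ∈ {±1}^B }. Let x ∈ X, let A be an s-greedy set for x with |A| = m, and let B be any set with |B| = m. Then for any choice of signs (η_j)_{j∈B∖A}, with γ = max_{j∈B∖A}|e_j*(x)|, one has ‖x − P_{A∪B}(x) + γ·1_{η(B∖A)}‖ ≤ D(s)·‖x − P_B(x)‖. -/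
/-!
Put `γ = max_{j ∈ B∖A} |e_j*(x)|` and `y = x - P_B x + γ·1_{η(B∖A)}`. The coordinates of `y` are
those of `x` off `B`, zero on `A ∩ B` and `±γ` on `B∖A`; since `B∖A` lies outside the `s`-greedy
set `A`, the set `A∖B` is `s`-greedy for `y`, and it has the same size as `B∖A`. The greedy
hypothesis at `y`, with the competitor `γ·1_{η(B∖A)}`, is exactly the claimed inequality because
`y - P_{A∖B} y = x - P_{A∪B} x + γ·1_{η(B∖A)}` and `y - γ·1_{η(B∖A)} = x - P_B x`.
-/

open Finset

namespace GreedyBasis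

variable {ι X : Type*} [NormedAddCommGroup X] [NormedSpace ℝ X]
  {e : ι → X} {e' : ι → X →L[ℝ] ℝ}

/-- The coordinate projection `P_C`. -/
def proj (e : ι → X) (e' : ι → X →L[ℝ] ℝ) (C : Finset ι) (x : X) : X :=
  ∑ n ∈ C, e' n x • e n

/-- The signed indicator `1_{ηC}`. -/
def signedSum (e : ι → X) (η : ι → ℝ) (C : Finset ι) : X :=
  ∑ n ∈ C, η n • e n

def IsGreedySet (e' : ι → X →L[ℝ] ℝ) (s : ℝ) (x : X) (A : Finset ι) : Prop :=
  ∀ a ∈ A, ∀ b ∉ A, s * |e' b x| ≤ |e' a x|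

theorem IsGreedySet.mul_abs_sup'_le {s : ℝ} {x : X} {A C : Finset ι}
    (hA : IsGreedySet e' s x A) (hC : C.Nonempty) (hCA : Disjoint C A) {a : ι} (ha : a ∈ A) :
    s * |C.sup' hC (fun j => |e' j x|)| ≤ |e' a x| := by
  obtain ⟨j, hj, hjmax⟩ := exists_mem_eq_sup' hC fun j => |e' j x|
  rw [hjmax, abs_abs]
  exact hA a ha j (disjoint_left.1 hCA hj)

section Biorthogonal

variable [DecidableEq ι] (hbi : ∀ n m, e' n (e m) = if n = m then 1 else 0)
include hbi

theorem coord_sum_smul (C : Finset ι) (c : ι → ℝ) (n : ι) :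
    e' n (∑ m ∈ C, c m • e m) = if n ∈ C then c n else 0 := by
  simp [map_sum, hbi]

theorem coord_sub_proj_add_smul_signedSum (x : X) (A B : Finset ι) (γ : ℝ) (η : ι → ℝ)
    (n : ι) :
    e' n (x - proj e e' B x + γ • signedSum e η (B \ A)) =
      if n ∈ B then (if n ∈ A then 0 else γ * η n) else e' n x := by
  simp only [proj, signedSum, map_add, map_sub, map_smul, coord_sum_smul hbi, mem_sdiff,
    smul_eq_mul]
  split_ifs <;> simp_all

theorem isGreedySet_sdiff {s γ : ℝ} {x : X} {A B : Finset ι} {η : ι → ℝ}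
    (hA : IsGreedySet e' s x A) (hγ : ∀ a ∈ A, s * |γ| ≤ |e' a x|)
    (hη : ∀ n ∈ B \ A, η n = 1 ∨ η n = -1) :
    IsGreedySet e' s (x - proj e e' B x + γ • signedSum e η (B \ A)) (A \ B) := by
  intro a ha b hb
  obtain ⟨haA, haB⟩ := mem_sdiff.1 ha
  simp only [coord_sub_proj_add_smul_signedSum hbi, if_neg haB]
  by_cases hbB : b ∈ B
  · by_cases hbA : b ∈ A
    · simp [hbB, hbA]
    · have hηb : |η b| = 1 := by
        rcases hη b (mem_sdiff.2 ⟨hbB, hbA⟩) with h | h <;> simp [h]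
      simpa [hbB, hbA, abs_mul, hηb] using hγ a haA
  · have hbA : b ∉ A := fun h => hb (mem_sdiff.2 ⟨h, hbB⟩)
    simpa [hbB] using hA a haA b hbA

theorem sub_proj_sdiff_eq (x : X) (A B : Finset ι) (γ : ℝ) (η : ι → ℝ) :
    let y := x - proj e e' B x + γ • signedSum e η (B \ A)
    y - proj e e' (A \ B) y = x - proj e e' (A ∪ B) x + γ • signedSum e η (B \ A) := by
  intro y
  have hcoord : proj e e' (A \ B) y = proj e e' (A \ B) x :=
    sum_congr rfl fun n hn => by
      rw [coord_sub_proj_add_smul_signedSum hbi, if_neg (mem_sdiff.1 hn).2]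
  have hunion : proj e e' (A ∪ B) x = proj e e' (A \ B) x + proj e e' B x := by
    rw [proj, ← sum_sdiff subset_union_right, union_sdiff_right, proj, proj]
  rw [hcoord, hunion]
  simp only [y]
  abel

end Biorthogonal

end GreedyBasis

open GreedyBasis

theorem stmt7_general {X : Type*} [NormedAddCommGroup X] [NormedSpace ℝ X]
    (e : ℕ → X) (e' : ℕ → X →L[ℝ] ℝ)
    (hbi : ∀ n m, e' n (e m) = if n = m then 1 else 0)
    (s D : ℝ)
    -- hypothesis: `‖y − Gˢ(y)‖ ≤ D·𝒟*_N(y)` for all `y`, all `s`-greedy sets of `y`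
    (hyp : ∀ (y : X) (A : Finset ℕ),
      (∀ a ∈ A, ∀ b ∉ A, s * |e' b y| ≤ |e' a y|) →
      ∀ (α : ℝ) (B : Finset ℕ) (η : ℕ → ℝ), B.card = A.card →
        (∀ n ∈ B, η n = 1 ∨ η n = -1) →
        ‖y - ∑ n ∈ A, e' n y • e n‖ ≤ D * ‖y - α • ∑ n ∈ B, η n • e n‖)
    (x : X) (A B : Finset ℕ) (hcard : B.card = A.card)
    (hA : ∀ a ∈ A, ∀ b ∉ A, s * |e' b x| ≤ |e' a x|)
    (hne : (B \ A).Nonempty) :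
    ∀ η : ℕ → ℝ, (∀ n ∈ B \ A, η n = 1 ∨ η n = -1) →
      ‖x - ∑ n ∈ A ∪ B, e' n x • e n +
          ((B \ A).sup' hne fun j => |e' j x|) • ∑ n ∈ B \ A, η n • e n‖
        ≤ D * ‖x - ∑ n ∈ B, e' n x • e n‖ := by
  intro η hη
  set γ := (B \ A).sup' hne fun j => |e' j x|
  set y := x - proj e e' B x + γ • signedSum e η (B \ A)
  have hγ : ∀ a ∈ A, s * |γ| ≤ |e' a x| := fun a ha =>
    IsGreedySet.mul_abs_sup'_le hA hne sdiff_disjoint ha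
  have hgreedy : IsGreedySet e' s y (A \ B) := isGreedySet_sdiff hbi hA hγ hη
  calc ‖x - proj e e' (A ∪ B) x + γ • signedSum e η (B \ A)‖
      = ‖y - proj e e' (A \ B) y‖ := by rw [sub_proj_sdiff_eq hbi]
    _ ≤ D * ‖y - γ • signedSum e η (B \ A)‖ :=
      hyp y (A \ B) hgreedy γ (B \ A) η (card_sdiff_comm hcard) hη
    _ = D * ‖x - proj e e' B x‖ := by rw [add_sub_cancel_right]

theorem stmt7 {X : Type*} [NormedAddCommGroup X] [NormedSpace ℝ X] [CompleteSpace X]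
    (e : ℕ → X) (e' : ℕ → X →L[ℝ] ℝ)
    (hnorm : ∀ n, ‖e n‖ = 1)
    (hbi : ∀ n m, e' n (e m) = if n = m then 1 else 0)
    (hbasis : ∀ x : X,
      Filter.Tendsto (fun N => ∑ n ∈ Finset.range N, e' n x • e n) Filter.atTop (nhds x))
    (s D : ℝ) (hs0 : 0 < s) (hs1 : s ≤ 1) (hD : 0 < D)
    -- hypothesis: `‖y − Gˢ(y)‖ ≤ D·𝒟*_N(y)` for all `y`, all `s`-greedy sets of `y`
    (hyp : ∀ (y : X) (A : Finset ℕ),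
      (∀ a ∈ A, ∀ b ∉ A, s * |e' b y| ≤ |e' a y|) →
      ∀ (α : ℝ) (B : Finset ℕ) (η : ℕ → ℝ), B.card = A.card →
        (∀ n ∈ B, η n = 1 ∨ η n = -1) →
        ‖y - ∑ n ∈ A, e' n y • e n‖ ≤ D * ‖y - α • ∑ n ∈ B, η n • e n‖)
    (x : X) (A B : Finset ℕ) (hcard : B.card = A.card)
    (hA : ∀ a ∈ A, ∀ b ∉ A, s * |e' b x| ≤ |e' a x|)
    (hne : (B \ A).Nonempty) :
    ∀ η : ℕ → ℝ, (∀ n ∈ B \ A, η n = 1 ∨ η n = -1) →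
      ‖x - ∑ n ∈ A ∪ B, e' n x • e n +
          ((B \ A).sup' hne fun j => |e' j x|) • ∑ n ∈ B \ A, η n • e n‖
        ≤ D * ‖x - ∑ n ∈ B, e' n x • e n‖ :=
  stmt7_general e e' hbi s D hyp x A B hcard hA hne
end

section
/- Let ℬ be a normalized Schauder basis of a Banach space X. Then ℬ has the PCCG property (there exists C with ‖x − 𝒢_m(x)‖ ≤ C·𝒟*_m(x) for all x, m and all greedy approximants 𝒢_m) if and only if ℬ is greedy (there exists C' with ‖x − 𝒢_m(x)‖ ≤ C'·σ_m(x) for all x, m and all greedy approximants). -/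
/-!
A PCCG basis is suppression unconditional: adding a large multiple of `1_A` to `x` makes `A` a
greedy set, and comparing with that very multiple gives `‖x - P_A x‖ ≤ C ‖x‖`. It is democratic:
for disjoint `A`, `B` of equal size, `A` is greedy for `1_A + 1_B`, whence `‖1_B‖ ≤ C ‖1_A‖`.
By convexity of the norm, unconditionality bounds `‖∑ a_n e_n‖` by `‖∑ b_n e_n‖` whenever
`|a_n| ≤ |b_n|`. Now let `A` be greedy for `x` and `z` supported on `B` with `|B| = |A|`. Then
`x - P_A x = (x - z) - P_{A ∪ B} (x - z) + P_{B \ A} x`, and the coefficients of `x` on `B \ A`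
are dominated by those on `A \ B`, so democracy bounds `P_{B \ A} x` by
`P_{A \ B} x = P_{A \ B} (x - z)`.
-/

open Finset Filter Topology

namespace GreedyAlgorithm

variable {X : Type*} [NormedAddCommGroup X] [NormedSpace ℝ X]

theorem exists_sign_norm_add_smul_le (w u : X) {t : ℝ} (ht : |t| ≤ 1) :
    ∃ σ : ℝ, (σ = 1 ∨ σ = -1) ∧ ‖w + t • u‖ ≤ ‖w + σ • u‖ := by
  obtain ⟨htl, htu⟩ := abs_le.1 ht
  have hseg : w + t • u ∈ segment ℝ (w - u) (w + u) :=
    ⟨(1 - t) / 2, (1 + t) / 2, by linarith, by linarith, by ring, by module⟩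
  rcases le_max_iff.1 ((convexOn_norm convex_univ).le_on_segment trivial trivial hseg) with h | h
  · exact ⟨-1, Or.inr rfl, by rwa [neg_one_smul, ← sub_eq_add_neg]⟩
  · exact ⟨1, Or.inl rfl, by rwa [one_smul]⟩

theorem exists_signs_norm_add_sum_smul_le {ι : Type*} [DecidableEq ι] (u : ι → X) (t : ι → ℝ)
    (S : Finset ι) (ht : ∀ n ∈ S, |t n| ≤ 1) (v : X) :
    ∃ θ : ι → ℝ, (∀ n ∈ S, θ n = 1 ∨ θ n = -1) ∧
      ‖v + ∑ n ∈ S, t n • u n‖ ≤ ‖v + ∑ n ∈ S, θ n • u n‖ := by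
  induction S using Finset.induction_on generalizing v with
  | empty => exact ⟨1, by simp, le_rfl⟩
  | @insert s S hs ih =>
    obtain ⟨θ, hθ, hle⟩ := ih (fun n hn => ht n (mem_insert_of_mem hn)) (v + t s • u s)
    obtain ⟨σ, hσ, hσle⟩ :=
      exists_sign_norm_add_smul_le (v + ∑ n ∈ S, θ n • u n) (u s) (ht s (mem_insert_self s S))
    have hsum : ∑ n ∈ S, Function.update θ s σ n • u n = ∑ n ∈ S, θ n • u n :=
      sum_congr rfl fun n hn => by rw [Function.update_of_ne (ne_of_mem_of_not_mem hn hs)]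
    refine ⟨Function.update θ s σ, fun n hn => ?_, ?_⟩
    · rcases eq_or_ne n s with rfl | hne
      · simpa using hσ
      · rw [Function.update_of_ne hne]
        exact hθ n (mem_of_mem_insert_of_ne hn hne)
    · rw [sum_insert hs, sum_insert hs, hsum, Function.update_self]
      calc ‖v + (t s • u s + ∑ n ∈ S, t n • u n)‖
          = ‖v + t s • u s + ∑ n ∈ S, t n • u n‖ := by rw [add_assoc]
        _ ≤ ‖v + t s • u s + ∑ n ∈ S, θ n • u n‖ := hle
        _ = ‖v + ∑ n ∈ S, θ n • u n + t s • u s‖ := by rw [add_right_comm]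
        _ ≤ ‖v + ∑ n ∈ S, θ n • u n + σ • u s‖ := hσle
        _ = ‖v + (σ • u s + ∑ n ∈ S, θ n • u n)‖ := by rw [add_right_comm, add_assoc]

theorem tendsto_zero_of_tendsto_sum_range {G : Type*} [AddCommGroup G] [TopologicalSpace G]
    [IsTopologicalAddGroup G] {f : ℕ → G} {x : G}
    (h : Tendsto (fun N => ∑ n ∈ range N, f n) atTop (𝓝 x)) : Tendsto f atTop (𝓝 0) := by
  simpa [sum_range_succ] using (h.comp (tendsto_add_atTop_nat 1)).sub h

theorem exists_abs_coeff_le {e : ℕ → X} {e' : ℕ → X →L[ℝ] ℝ} (hnorm : ∀ n, ‖e n‖ = 1)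
    (hbasis : ∀ x : X, Tendsto (fun N => ∑ n ∈ range N, e' n x • e n) atTop (𝓝 x)) (x : X) :
    ∃ R, ∀ n, |e' n x| ≤ R := by
  have h := (tendsto_zero_of_tendsto_sum_range (hbasis x)).norm
  simp only [norm_smul, hnorm, mul_one, Real.norm_eq_abs, norm_zero] at h
  obtain ⟨R, hR⟩ := h.bddAbove_range
  exact ⟨R, fun n => hR (Set.mem_range_self n)⟩

variable {ι : Type*} (e : ι → X) (e' : ι → X →L[ℝ] ℝ)

def proj (A : Finset ι) : X →ₗ[ℝ] X where
  toFun x := ∑ n ∈ A, e' n x • e n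
  map_add' x y := by simp only [map_add, add_smul, sum_add_distrib]
  map_smul' c x := by simp only [map_smul, smul_eq_mul, mul_smul, smul_sum, RingHom.id_apply]

def IsGreedySet (x : X) (A : Finset ι) : Prop :=
  ∀ a ∈ A, ∀ b ∉ A, |e' b x| ≤ |e' a x|

def IsSuppressionUnconditional (C : ℝ) : Prop :=
  ∀ (x : X) (A : Finset ι), ‖x - proj e e' A x‖ ≤ C * ‖x‖

def IsPCCG (C : ℝ) : Prop :=
  ∀ (x : X) (A : Finset ι), IsGreedySet e' x A →
    ∀ (α : ℝ) (B : Finset ι) (η : ι → ℝ), B.card = A.card → (∀ n ∈ B, η n = 1 ∨ η n = -1) →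
      ‖x - proj e e' A x‖ ≤ C * ‖x - α • ∑ n ∈ B, η n • e n‖

def IsGreedy (C : ℝ) : Prop :=
  ∀ (x : X) (A : Finset ι), IsGreedySet e' x A →
    ∀ (B : Finset ι) (c : ι → ℝ), B.card = A.card →
      ‖x - proj e e' A x‖ ≤ C * ‖x - ∑ n ∈ B, c n • e n‖

variable {e e'}

theorem proj_apply (A : Finset ι) (x : X) : proj e e' A x = ∑ n ∈ A, e' n x • e n := rfl

theorem IsGreedy.isPCCG {C : ℝ} (h : IsGreedy e e' C) : IsPCCG e e' C := by
  intro x A hA α B η hcard _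
  simpa only [smul_sum, smul_smul] using h x A hA B (fun n => α * η n) hcard

theorem IsSuppressionUnconditional.norm_proj_le {C : ℝ} (hU : IsSuppressionUnconditional e e' C)
    (A : Finset ι) (x : X) : ‖proj e e' A x‖ ≤ (1 + C) * ‖x‖ :=
  calc ‖proj e e' A x‖ = ‖x - (x - proj e e' A x)‖ := by rw [sub_sub_cancel]
    _ ≤ ‖x‖ + C * ‖x‖ := (norm_sub_le _ _).trans (add_le_add_right (hU x A) _)
    _ = (1 + C) * ‖x‖ := by ring

variable [DecidableEq ι]

theorem coeff_sum_smul (hbi : ∀ n m, e' n (e m) = if n = m then 1 else 0)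
    (B : Finset ι) (c : ι → ℝ) (m : ι) :
    e' m (∑ n ∈ B, c n • e n) = if m ∈ B then c m else 0 := by
  simp [hbi]

theorem proj_sum_smul (hbi : ∀ n m, e' n (e m) = if n = m then 1 else 0)
    (A B : Finset ι) (c : ι → ℝ) :
    proj e e' A (∑ n ∈ B, c n • e n) = ∑ n ∈ A ∩ B, c n • e n := by
  simp only [proj_apply, coeff_sum_smul hbi, ite_smul, zero_smul, sum_ite_mem]

theorem proj_sum (hbi : ∀ n m, e' n (e m) = if n = m then 1 else 0) (A B : Finset ι) :
    proj e e' A (∑ n ∈ B, e n) = ∑ n ∈ A ∩ B, e n := by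
  simpa using proj_sum_smul hbi A B 1

theorem IsSuppressionUnconditional.norm_sum_signs_smul_le {C : ℝ}
    (hU : IsSuppressionUnconditional e e' C) (hbi : ∀ n m, e' n (e m) = if n = m then 1 else 0)
    {S : Finset ι} {θ : ι → ℝ} (hθ : ∀ n ∈ S, θ n = 1 ∨ θ n = -1) (b : ι → ℝ) :
    ‖∑ n ∈ S, θ n • b n • e n‖ ≤ (1 + 2 * C) * ‖∑ n ∈ S, b n • e n‖ := by
  set u := ∑ n ∈ S, b n • e n
  set T := S.filter (θ · = -1)
  -- flipping the signs on `T` is `u ↦ u - 2 P_T u = 2 (u - P_T u) - u`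
  have hflip : ∑ n ∈ S, θ n • b n • e n = (2 : ℝ) • (u - proj e e' T u) - u := by
    rw [proj_sum_smul hbi, filter_inter, inter_self, sum_filter, ← sum_sub_distrib, smul_sum,
      ← sum_sub_distrib]
    refine sum_congr rfl fun n hn => ?_
    rcases hθ n hn with h | h <;> norm_num [h, two_smul]
  calc ‖∑ n ∈ S, θ n • b n • e n‖ ≤ 2 * ‖u - proj e e' T u‖ + ‖u‖ := by
        rw [hflip]; refine (norm_sub_le _ _).trans ?_; rw [norm_smul, Real.norm_two]
    _ ≤ 2 * (C * ‖u‖) + ‖u‖ := by gcongr; exact hU u T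
    _ = (1 + 2 * C) * ‖u‖ := by ring

theorem IsSuppressionUnconditional.norm_sum_smul_le_of_abs_le {C : ℝ}
    (hU : IsSuppressionUnconditional e e' C) (hbi : ∀ n m, e' n (e m) = if n = m then 1 else 0)
    {S : Finset ι} {a b : ι → ℝ} (hab : ∀ n ∈ S, |a n| ≤ |b n|) :
    ‖∑ n ∈ S, a n • e n‖ ≤ (1 + 2 * C) * ‖∑ n ∈ S, b n • e n‖ := by
  -- `a = t b` with `|t| ≤ 1`; the junk value `a n / 0 = 0` is harmless since then `a n = 0`
  have hab' : ∀ n ∈ S, a n = (a n / b n) * b n := fun n hn => by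
    rcases eq_or_ne (b n) 0 with h | h
    · simpa [h] using hab n hn
    · rw [div_mul_cancel₀ _ h]
  have ht : ∀ n ∈ S, |a n / b n| ≤ 1 := fun n hn => by
    rw [abs_div]; exact div_le_one_of_le₀ (hab n hn) (abs_nonneg _)
  obtain ⟨θ, hθ, hle⟩ := exists_signs_norm_add_sum_smul_le (fun n => b n • e n) _ S ht 0
  calc ‖∑ n ∈ S, a n • e n‖ = ‖0 + ∑ n ∈ S, (a n / b n) • b n • e n‖ := by
        rw [zero_add]; congr 1; exact sum_congr rfl fun n hn => by rw [smul_smul, ← hab' n hn]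
    _ ≤ ‖∑ n ∈ S, θ n • b n • e n‖ := by simpa only [zero_add] using hle
    _ ≤ (1 + 2 * C) * ‖∑ n ∈ S, b n • e n‖ := hU.norm_sum_signs_smul_le hbi hθ b

theorem IsPCCG.isSuppressionUnconditional {C : ℝ} (hP : IsPCCG e e' C)
    (hbi : ∀ n m, e' n (e m) = if n = m then 1 else 0) (hbdd : ∀ x, ∃ R, ∀ n, |e' n x| ≤ R) :
    IsSuppressionUnconditional e e' C := by
  intro x A
  obtain ⟨R, hR⟩ := hbdd x
  set y := x + (2 * R) • ∑ n ∈ A, e n with hy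
  have hcoeff : ∀ n, e' n y = e' n x + if n ∈ A then 2 * R else 0 := by simp [y, hbi]
  have hgreedy : IsGreedySet e' y A := fun a ha b hb => by
    rw [hcoeff, hcoeff, if_pos ha, if_neg hb, add_zero]
    linarith [hR b, (abs_le.1 (hR a)).1, le_abs_self (e' a x + 2 * R)]
  have hPy : y - proj e e' A y = x - proj e e' A x := by
    rw [hy, map_add, map_smul, proj_sum hbi, inter_self]; abel
  have h := hP y A hgreedy (2 * R) A 1 rfl fun _ _ => Or.inl rfl
  rwa [hPy, Pi.one_def, sum_congr rfl fun n _ => one_smul ℝ (e n), hy, add_sub_cancel_right] at h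

theorem IsPCCG.norm_sum_le_of_card_eq {C : ℝ} (hP : IsPCCG e e' C)
    (hbi : ∀ n m, e' n (e m) = if n = m then 1 else 0) {S T : Finset ι} (hST : Disjoint S T)
    (hcard : S.card = T.card) : ‖∑ n ∈ S, e n‖ ≤ C * ‖∑ n ∈ T, e n‖ := by
  set x := ∑ n ∈ S ∪ T, e n with hx
  have hcoeff : ∀ n, e' n x = if n ∈ S ∪ T then 1 else 0 := by simp [x, hbi]
  have hgreedy : IsGreedySet e' x T := fun a ha b _ => by
    rw [hcoeff, hcoeff, if_pos (mem_union_right S ha)]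
    split_ifs <;> norm_num
  have h := hP x T hgreedy 1 S 1 hcard fun _ _ => Or.inl rfl
  rwa [proj_sum hbi, inter_eq_left.2 subset_union_right, Pi.one_def,
    sum_congr rfl fun n _ => one_smul ℝ (e n), one_smul, hx, sum_union hST, add_sub_cancel_right,
    add_sub_cancel_left] at h

theorem norm_proj_le_of_abs_coeff_le {C : ℝ} (hC : 0 ≤ C) (hP : IsPCCG e e' C)
    (hU : IsSuppressionUnconditional e e' C) (hbi : ∀ n m, e' n (e m) = if n = m then 1 else 0)
    {S T : Finset ι} (hST : Disjoint S T) (hcard : S.card = T.card) {x : X}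
    (hle : ∀ s ∈ S, ∀ t ∈ T, |e' s x| ≤ |e' t x|) :
    ‖proj e e' S x‖ ≤ (1 + 2 * C) ^ 2 * C * ‖proj e e' T x‖ := by
  rcases T.eq_empty_or_nonempty with rfl | hT
  · rw [card_empty, card_eq_zero] at hcard
    simp [hcard, proj_apply]
  obtain ⟨t₀, ht₀, hmin⟩ := T.exists_min_image (fun n => |e' n x|) hT
  set lam := |e' t₀ x|
  have hnorm_const : ∀ D : Finset ι, ‖∑ n ∈ D, lam • e n‖ = lam * ‖∑ n ∈ D, e n‖ := fun D => by
    rw [← smul_sum, norm_smul, Real.norm_eq_abs, abs_abs]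
  calc ‖proj e e' S x‖ ≤ (1 + 2 * C) * ‖∑ n ∈ S, lam • e n‖ :=
        hU.norm_sum_smul_le_of_abs_le hbi fun n hn => by rw [abs_abs]; exact hle n hn t₀ ht₀
    _ ≤ (1 + 2 * C) * (lam * (C * ‖∑ n ∈ T, e n‖)) := by
        rw [hnorm_const]; gcongr; exact hP.norm_sum_le_of_card_eq hbi hST hcard
    _ = (1 + 2 * C) * C * ‖∑ n ∈ T, lam • e n‖ := by rw [hnorm_const]; ring
    _ ≤ (1 + 2 * C) * C * ((1 + 2 * C) * ‖proj e e' T x‖) := by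
        gcongr; exact hU.norm_sum_smul_le_of_abs_le hbi fun n hn => by rw [abs_abs]; exact hmin n hn
    _ = (1 + 2 * C) ^ 2 * C * ‖proj e e' T x‖ := by ring

theorem IsPCCG.isGreedy {C : ℝ} (hC : 0 ≤ C) (hP : IsPCCG e e' C)
    (hbi : ∀ n m, e' n (e m) = if n = m then 1 else 0) (hbdd : ∀ x, ∃ R, ∀ n, |e' n x| ≤ R) :
    IsGreedy e e' (C + (1 + 2 * C) ^ 2 * C * (1 + C)) := by
  have hU := hP.isSuppressionUnconditional hbi hbdd
  intro x A hA B c hcard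
  set z := ∑ n ∈ B, c n • e n
  have hunion : proj e e' (A ∪ B) = proj e e' A + proj e e' (B \ A) := by
    ext y; rw [← union_sdiff_self_eq_union, LinearMap.add_apply, proj_apply, proj_apply, proj_apply,
      sum_union disjoint_sdiff]
  have hz : proj e e' (A ∪ B) z = z := by
    rw [proj_sum_smul hbi, inter_eq_right.2 subset_union_right]
  have hdecomp : x - proj e e' A x =
      ((x - z) - proj e e' (A ∪ B) (x - z)) + proj e e' (B \ A) x := by
    rw [map_sub, hz, hunion, LinearMap.add_apply]; abel
  have hPT : proj e e' (A \ B) x = proj e e' (A \ B) (x - z) := by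
    rw [map_sub, proj_sum_smul hbi, sdiff_inter_self, sum_empty, sub_zero]
  have htail : ‖proj e e' (B \ A) x‖ ≤ (1 + 2 * C) ^ 2 * C * ‖proj e e' (A \ B) x‖ :=
    norm_proj_le_of_abs_coeff_le hC hP hU hbi disjoint_sdiff_sdiff (card_sdiff_comm hcard)
      fun s hs t ht => hA t (mem_sdiff.1 ht).1 s (mem_sdiff.1 hs).2
  calc ‖x - proj e e' A x‖
      ≤ ‖(x - z) - proj e e' (A ∪ B) (x - z)‖ + ‖proj e e' (B \ A) x‖ := by
        rw [hdecomp]; exact norm_add_le _ _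
    _ ≤ C * ‖x - z‖ + (1 + 2 * C) ^ 2 * C * ((1 + C) * ‖x - z‖) := by
        gcongr
        · exact hU _ _
        · exact htail.trans (by rw [hPT]; gcongr; exact hU.norm_proj_le _ _)
    _ = (C + (1 + 2 * C) ^ 2 * C * (1 + C)) * ‖x - z‖ := by ring

theorem exists_isPCCG_iff_exists_isGreedy (hbi : ∀ n m, e' n (e m) = if n = m then 1 else 0)
    (hbdd : ∀ x, ∃ R, ∀ n, |e' n x| ≤ R) :
    (∃ C > 0, IsPCCG e e' C) ↔ (∃ C > 0, IsGreedy e e' C) :=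
  ⟨fun ⟨C, hC, hP⟩ => ⟨_, by positivity, hP.isGreedy hC.le hbi hbdd⟩,
    fun ⟨C, hC, hG⟩ => ⟨C, hC, hG.isPCCG⟩⟩

end GreedyAlgorithm

theorem stmt8_general {X : Type*} [NormedAddCommGroup X] [NormedSpace ℝ X]
    (e : ℕ → X) (e' : ℕ → X →L[ℝ] ℝ)
    (hnorm : ∀ n, ‖e n‖ = 1)
    (hbi : ∀ n m, e' n (e m) = if n = m then 1 else 0)
    (hbasis : ∀ x : X,
      Filter.Tendsto (fun N => ∑ n ∈ Finset.range N, e' n x • e n) Filter.atTop (nhds x)) :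
    -- PCCG property
    (∃ C > (0 : ℝ), ∀ (x : X) (A : Finset ℕ),
      (∀ a ∈ A, ∀ b ∉ A, |e' b x| ≤ |e' a x|) →
      ∀ (α : ℝ) (B : Finset ℕ) (η : ℕ → ℝ), B.card = A.card →
        (∀ n ∈ B, η n = 1 ∨ η n = -1) →
        ‖x - ∑ n ∈ A, e' n x • e n‖ ≤ C * ‖x - α • ∑ n ∈ B, η n • e n‖)
    ↔
    -- greedy
    (∃ C' > (0 : ℝ), ∀ (x : X) (A : Finset ℕ),
      (∀ a ∈ A, ∀ b ∉ A, |e' b x| ≤ |e' a x|) →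
      ∀ (B : Finset ℕ) (c : ℕ → ℝ), B.card = A.card →
        ‖x - ∑ n ∈ A, e' n x • e n‖ ≤ C' * ‖x - ∑ n ∈ B, c n • e n‖) :=
  GreedyAlgorithm.exists_isPCCG_iff_exists_isGreedy hbi
    (GreedyAlgorithm.exists_abs_coeff_le hnorm hbasis)

theorem stmt8 {X : Type*} [NormedAddCommGroup X] [NormedSpace ℝ X] [CompleteSpace X]
    (e : ℕ → X) (e' : ℕ → X →L[ℝ] ℝ)
    (hnorm : ∀ n, ‖e n‖ = 1)
    (hbi : ∀ n m, e' n (e m) = if n = m then 1 else 0)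
    (hbasis : ∀ x : X,
      Filter.Tendsto (fun N => ∑ n ∈ Finset.range N, e' n x • e n) Filter.atTop (nhds x)) :
    -- PCCG property
    (∃ C > (0 : ℝ), ∀ (x : X) (A : Finset ℕ),
      (∀ a ∈ A, ∀ b ∉ A, |e' b x| ≤ |e' a x|) →
      ∀ (α : ℝ) (B : Finset ℕ) (η : ℕ → ℝ), B.card = A.card →
        (∀ n ∈ B, η n = 1 ∨ η n = -1) →
        ‖x - ∑ n ∈ A, e' n x • e n‖ ≤ C * ‖x - α • ∑ n ∈ B, η n • e n‖)
    ↔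
    -- greedy
    (∃ C' > (0 : ℝ), ∀ (x : X) (A : Finset ℕ),
      (∀ a ∈ A, ∀ b ∉ A, |e' b x| ≤ |e' a x|) →
      ∀ (B : Finset ℕ) (c : ℕ → ℝ), B.card = A.card →
        ‖x - ∑ n ∈ A, e' n x • e n‖ ≤ C' * ‖x - ∑ n ∈ B, c n • e n‖) :=
  stmt8_general e e' hnorm hbi hbasis
end

section
/- For an orthonormal basis (eₙ) of an infinite-dimensional Hilbert space H and any x ∈ H, the best m-term approximation with respect to polynomials with constant coefficients 𝒟*_m(x) = inf{ ‖x − α·∑_{n∈A} ηₙeₙ‖ : α ∈ ℝ, |A| = m, ηₙ ∈ {±1} } tends to ‖x‖ as m → ∞. -/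
/-!
Minimizing over `α`, `‖x - α • s‖² ≥ ‖x‖² - ⟪x, s⟫² / ‖s‖²`. For a signed sum `s` of `m`
orthonormal vectors, `‖s‖² = m` while `|⟪x, s⟫| ≤ ∑_{n ∈ A} |⟪eₙ, x⟫|`, and by Bessel's inequality
these coefficients are square-summable, so this `ℓ¹`-sum is `o(√m)` uniformly in `A`. Hence the
error is at least `‖x‖ - o(1)`, while `α = 0` shows it is at most `‖x‖`.
-/

open Finset Filter Topology
open scoped RealInnerProductSpace

/-- A finite head contributes a bounded amount; Cauchy–Schwarz controls the small tail. -/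
theorem Summable.exists_sq_sum_norm_le_mul_card {ι E : Type*} [SeminormedAddCommGroup E]
    {c : ι → E} (hc : Summable fun i => ‖c i‖ ^ 2) {ε : ℝ} (hε : 0 < ε) :
    ∃ M : ℕ, ∀ A : Finset ι, M ≤ #A → (∑ i ∈ A, ‖c i‖) ^ 2 ≤ ε * #A := by
  classical
  obtain ⟨F, hF⟩ := summable_iff_vanishing_norm.1 hc (ε / 4) (by positivity)
  set C := ∑ i ∈ F, ‖c i‖
  obtain ⟨M, hM⟩ := exists_nat_ge (4 * C ^ 2 / ε)
  refine ⟨M, fun A hA => ?_⟩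
  have hC : 4 * C ^ 2 ≤ ε * #A := by
    rw [div_le_iff₀ hε] at hM
    nlinarith [(Nat.cast_le (α := ℝ)).2 hA]
  have head : ∑ i ∈ A ∩ F, ‖c i‖ ≤ C :=
    sum_le_sum_of_subset_of_nonneg inter_subset_right fun _ _ _ => norm_nonneg _
  have tail_sq : ∑ i ∈ A \ F, ‖c i‖ ^ 2 ≤ ε / 4 := by
    have := hF (A \ F) sdiff_disjoint
    rw [Real.norm_of_nonneg (sum_nonneg fun _ _ => by positivity)] at this
    exact this.le
  have tail : (∑ i ∈ A \ F, ‖c i‖) ^ 2 ≤ #A * (ε / 4) :=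
    calc (∑ i ∈ A \ F, ‖c i‖) ^ 2 ≤ #(A \ F) * ∑ i ∈ A \ F, ‖c i‖ ^ 2 :=
          sq_sum_le_card_mul_sum_sq
      _ ≤ #A * (ε / 4) := by gcongr; exact sdiff_subset
  have head_sq : (∑ i ∈ A ∩ F, ‖c i‖) ^ 2 ≤ C ^ 2 :=
    pow_le_pow_left₀ (sum_nonneg fun _ _ => norm_nonneg _) head 2
  rw [← sum_inter_add_sum_sdiff A F]
  nlinarith [sq_nonneg (∑ i ∈ A ∩ F, ‖c i‖ - ∑ i ∈ A \ F, ‖c i‖)]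

section InnerProductSpace

variable {H : Type*} [NormedAddCommGroup H] [InnerProductSpace ℝ H]

/-- Equality holds at `α = ⟪x, s⟫ / ‖s‖²`. -/
theorem norm_sq_sub_inner_sq_div_le_norm_sub_smul_sq (x s : H) (α : ℝ) :
    ‖x‖ ^ 2 - ⟪x, s⟫ ^ 2 / ‖s‖ ^ 2 ≤ ‖x - α • s‖ ^ 2 := by
  rw [norm_sub_sq_real, real_inner_smul_right, norm_smul, mul_pow, Real.norm_eq_abs, sq_abs]
  rcases eq_or_ne s 0 with rfl | hs
  · simp
  have hs2 : 0 < ‖s‖ ^ 2 := by positivity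
  have : 2 * (α * ⟪x, s⟫) - α ^ 2 * ‖s‖ ^ 2 ≤ ⟪x, s⟫ ^ 2 / ‖s‖ ^ 2 := by
    rw [le_div_iff₀ hs2]
    nlinarith [sq_nonneg (⟪x, s⟫ - α * ‖s‖ ^ 2)]
  linarith

theorem Orthonormal.norm_sum_smul_sq {ι : Type*} {e : ι → H} (he : Orthonormal ℝ e)
    (A : Finset ι) (η : ι → ℝ) : ‖∑ i ∈ A, η i • e i‖ ^ 2 = ∑ i ∈ A, η i ^ 2 := by
  rw [← real_inner_self_eq_norm_sq, he.inner_sum]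
  simp [sq]

theorem abs_inner_sum_smul_le {ι : Type*} (e : ι → H) (x : H) (A : Finset ι) {η : ι → ℝ}
    (hη : ∀ i ∈ A, |η i| ≤ 1) : |⟪x, ∑ i ∈ A, η i • e i⟫| ≤ ∑ i ∈ A, ‖⟪e i, x⟫‖ := by
  rw [inner_sum]
  refine (abs_sum_le_sum_abs _ _).trans (sum_le_sum fun i hi => ?_)
  rw [real_inner_smul_right, abs_mul, real_inner_comm, Real.norm_eq_abs]
  exact mul_le_of_le_one_left (abs_nonneg _) (hη i hi)

theorem Orthonormal.exists_norm_sq_sub_le_norm_sub_smul_sum_sq {ι : Type*} {e : ι → H}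
    (he : Orthonormal ℝ e) (x : H) {ε : ℝ} (hε : 0 < ε) :
    ∃ M : ℕ, ∀ (α : ℝ) (A : Finset ι) (η : ι → ℝ), M ≤ #A → (∀ i ∈ A, η i = 1 ∨ η i = -1) →
      ‖x‖ ^ 2 - ε ≤ ‖x - α • ∑ i ∈ A, η i • e i‖ ^ 2 := by
  have hsum : Summable fun i => ‖⟪e i, x⟫‖ ^ 2 := he.inner_products_summable x
  obtain ⟨M, hM⟩ := hsum.exists_sq_sum_norm_le_mul_card hε
  refine ⟨M, fun α A η hA hη => ?_⟩
  have hnorm : ‖∑ i ∈ A, η i • e i‖ ^ 2 = #A := by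
    rw [he.norm_sum_smul_sq, card_eq_sum_ones, Nat.cast_sum]
    exact sum_congr rfl fun i hi => by rcases hη i hi with h | h <;> simp [h]
  have hinner : ⟪x, ∑ i ∈ A, η i • e i⟫ ^ 2 ≤ (∑ i ∈ A, ‖⟪e i, x⟫‖) ^ 2 := by
    rw [← sq_abs]
    refine pow_le_pow_left₀ (abs_nonneg _) (abs_inner_sum_smul_le e x A fun i hi => ?_) 2
    rcases hη i hi with h | h <;> simp [h]
  have hcorr : ⟪x, ∑ i ∈ A, η i • e i⟫ ^ 2 / ‖∑ i ∈ A, η i • e i‖ ^ 2 ≤ ε := by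
    rw [hnorm]
    exact div_le_of_le_mul₀ (Nat.cast_nonneg _) hε.le
      (hinner.trans (hM A hA))
  linarith [norm_sq_sub_inner_sq_div_le_norm_sub_smul_sq x (∑ i ∈ A, η i • e i) α]

/-- `𝒟*_m(x)` in the paper's notation. -/
noncomputable def bestConstCoeffApprox (e : ℕ → H) (x : H) (m : ℕ) : ℝ :=
  sInf {r : ℝ | ∃ (α : ℝ) (A : Finset ℕ) (η : ℕ → ℝ),
    A.card = m ∧ (∀ n ∈ A, η n = 1 ∨ η n = -1) ∧ r = ‖x - α • ∑ n ∈ A, η n • e n‖}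

theorem bestConstCoeffApprox_le_norm (e : ℕ → H) (x : H) (m : ℕ) :
    bestConstCoeffApprox e x m ≤ ‖x‖ :=
  csInf_le ⟨0, by rintro r ⟨α, A, η, -, -, rfl⟩; positivity⟩
    ⟨0, range m, fun _ => 1, by simp⟩

theorem Orthonormal.eventually_norm_sub_le_bestConstCoeffApprox {e : ℕ → H}
    (he : Orthonormal ℝ e) (x : H) {δ : ℝ} (hδ : 0 < δ) :
    ∀ᶠ m in atTop, ‖x‖ - δ ≤ bestConstCoeffApprox e x m := by
  obtain ⟨M, hM⟩ := he.exists_norm_sq_sub_le_norm_sub_smul_sum_sq x (pow_pos hδ 2)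
  refine eventually_atTop.2 ⟨M, fun m hm => le_csInf ⟨‖x‖, 0, range m, fun _ => 1, by simp⟩ ?_⟩
  rintro r ⟨α, A, η, hA, hη, rfl⟩
  have := hM α A η (hA ▸ hm) hη
  nlinarith [norm_nonneg x, norm_nonneg (x - α • ∑ n ∈ A, η n • e n)]

theorem Orthonormal.tendsto_bestConstCoeffApprox {e : ℕ → H} (he : Orthonormal ℝ e) (x : H) :
    Tendsto (bestConstCoeffApprox e x) atTop (𝓝 ‖x‖) := by
  refine Metric.tendsto_atTop.2 fun δ hδ => ?_
  obtain ⟨M, hM⟩ := eventually_atTop.1 (he.eventually_norm_sub_le_bestConstCoeffApprox x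
    (half_pos hδ))
  refine ⟨M, fun m hm => ?_⟩
  rw [Real.dist_eq, abs_lt]
  constructor <;> linarith [hM m hm, bestConstCoeffApprox_le_norm e x m]

end InnerProductSpace

theorem stmt13_general {H : Type*} [NormedAddCommGroup H] [InnerProductSpace ℝ H]
    (e : ℕ → H) (he : Orthonormal ℝ e)
    (x : H) :
    Filter.Tendsto
      (fun m : ℕ => sInf {r : ℝ | ∃ (α : ℝ) (A : Finset ℕ) (η : ℕ → ℝ),
        A.card = m ∧ (∀ n ∈ A, η n = 1 ∨ η n = -1) ∧
        r = ‖x - α • ∑ n ∈ A, η n • e n‖})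
      Filter.atTop (nhds ‖x‖) :=
  he.tendsto_bestConstCoeffApprox x

theorem stmt13 {H : Type*} [NormedAddCommGroup H] [InnerProductSpace ℝ H] [CompleteSpace H]
    (e : ℕ → H) (he : Orthonormal ℝ e)
    (htotal : (Submodule.span ℝ (Set.range e)).topologicalClosure = ⊤)
    (x : H) :
    Filter.Tendsto
      (fun m : ℕ => sInf {r : ℝ | ∃ (α : ℝ) (A : Finset ℕ) (η : ℕ → ℝ),
        A.card = m ∧ (∀ n ∈ A, η n = 1 ∨ η n = -1) ∧
        r = ‖x - α • ∑ n ∈ A, η n • e n‖})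
      Filter.atTop (nhds ‖x‖) :=
  stmt13_general e he x
end
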